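/- For the ECA rule 8, with local rule h(a,b,c) = ¬a ∧ b ∧ c, and for every n ≥ 3: if two block-sequential update schedules τ and τ' satisfy, for some cell i ∈ ℤ/nℤ, (1) lab_τ((i+1,i)) = lab_τ'((i+1,i)) = ⊖, (2) lab_τ((i−1,i)) ≠ lab_τ'((i−1,i)), and (3) lab_τ and lab_τ' agree on every arc other than (i−1,i), then f^{(τ)} = f^{(τ')}, i.e. the two dynamics are identical. -/

import Mathlib

/-- One round of a block-sequential update: all cells of rank `k` are updated
simultaneously by the ECA local rule `h`, reading the current states. -/
def ecaStep (n : ℕ) (h : Bool → Bool → Bool → Bool) (τ : ZMod n → ℕ) (k : ℕ)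
    (x : ZMod n → Bool) : ZMod n → Bool :=
  fun i => if τ i = k then h (x (i - 1)) (x i) (x (i + 1)) else x i

/-- State after processing ranks `0, 1, …, k` in increasing order. -/
def ecaUpTo (n : ℕ) (h : Bool → Bool → Bool → Bool) (τ : ZMod n → ℕ) :
    ℕ → (ZMod n → Bool) → ZMod n → Bool
  | 0 => ecaStep n h τ 0
  | k + 1 => fun x => ecaStep n h τ (k + 1) (ecaUpTo n h τ k x)

/-- Asynchronous global function `f^{(τ)}` for the block-sequential update
schedule `τ : ZMod n → ℕ` (rank of each cell): a cell keeps the value it gets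
in the round where it is updated (it is never updated again afterwards). -/
def ecaAsync (n : ℕ) (h : Bool → Bool → Bool → Bool) (τ : ZMod n → ℕ)
    (x : ZMod n → Bool) : ZMod n → Bool :=
  fun i => ecaUpTo n h τ (τ i) x i

/-- Synchronous global function of the ECA with local rule `h`. -/
def ecaSync (n : ℕ) (h : Bool → Bool → Bool → Bool) (x : ZMod n → Bool) :
    ZMod n → Bool :=
  fun i => h (x (i - 1)) (x i) (x (i + 1))

/-- Label of the arc `(i, j)` for schedule `τ`:
`true` = ⊕ (τ i ≥ τ j), `false` = ⊖ (τ i < τ j). -/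
def lab (n : ℕ) (τ : ZMod n → ℕ) (i j : ZMod n) : Bool :=
  decide (τ j ≤ τ i)

/-!
Cell `i` sees the new value of cell `i + 1`, which rule 8 computes as `¬ xᵢ ∧ …`; hence the
new value of cell `i` is `… ∧ xᵢ ∧ ¬ xᵢ ∧ … = false`, whatever it reads at `i - 1`. So the
label of the arc `(i - 1, i)` never matters, and any other cell reads the same mix of old and
new states under both schedules, which gives equality by induction on the rank.
-/

section Async

variable {n : ℕ} (h : Bool → Bool → Bool → Bool) (τ : ZMod n → ℕ)

theorem lab_eq_false_iff {i j : ZMod n} : lab n τ i j = false ↔ τ i < τ j := by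
  simp [lab]

theorem ecaUpTo_apply (k : ℕ) (x : ZMod n → Bool) (j : ZMod n) :
    ecaUpTo n h τ k x j = if τ j ≤ k then ecaAsync n h τ x j else x j := by
  induction k with
  | zero =>
    by_cases hj : τ j = 0 <;> simp [ecaUpTo, ecaStep, ecaAsync, hj]
  | succ k ih =>
    by_cases hj : τ j = k + 1
    · simp [ecaAsync, hj]
    · simp only [ecaUpTo, ecaStep, if_neg hj, ih]
      split_ifs <;> first | rfl | omega

/-- A cell reads the old state of a neighbour across an arc labelled ⊕ and the new state
across an arc labelled ⊖. -/
theorem ecaAsync_apply (x : ZMod n → Bool) (j : ZMod n) :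
    ecaAsync n h τ x j =
      h (if lab n τ (j - 1) j then x (j - 1) else ecaAsync n h τ x (j - 1)) (x j)
        (if lab n τ (j + 1) j then x (j + 1) else ecaAsync n h τ x (j + 1)) := by
  rcases hj : τ j with _ | k
  · simp [ecaAsync, ecaUpTo, ecaStep, lab, hj]
  · have hread : ∀ l, ecaUpTo n h τ k x l =
        if lab n τ l j then x l else ecaAsync n h τ x l := by
      intro l
      rw [ecaUpTo_apply]
      by_cases hl : τ l ≤ k <;> simp [lab, hj, hl]
    show ecaUpTo n h τ (τ j) x j = _
    rw [hj]
    show ecaStep n h τ (k + 1) (ecaUpTo n h τ k x) j = _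
    rw [ecaStep, if_pos hj, hread, hread, hread]
    simp [lab]

theorem ecaAsync_eq_of_lab_eq {τ' : ZMod n → ℕ} (i : ZMod n)
    (hi : ∀ x, ecaAsync n h τ x i = ecaAsync n h τ' x i)
    (hlab : ∀ j ≠ i, lab n τ (j - 1) j = lab n τ' (j - 1) j ∧
      lab n τ (j + 1) j = lab n τ' (j + 1) j) :
    ecaAsync n h τ = ecaAsync n h τ' := by
  funext x j
  induction hk : τ j using Nat.strong_induction_on generalizing j with
  | _ k ih =>
    by_cases hji : j = i
    · exact hji ▸ hi x
    have hread : ∀ l, lab n τ l j = lab n τ' l j →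
        (if lab n τ l j then x l else ecaAsync n h τ x l) =
          (if lab n τ' l j then x l else ecaAsync n h τ' x l) := by
      intro l hl
      rw [← hl]
      cases hlj : lab n τ l j
      · rw [lab_eq_false_iff] at hlj
        simpa using ih _ (hk ▸ hlj) l rfl
      · rfl
    rw [ecaAsync_apply h τ x j, ecaAsync_apply h τ' x j, hread _ (hlab j hji).1,
      hread _ (hlab j hji).2]

end Async

theorem ecaAsync_rule8_eq_false {n : ℕ} {τ : ZMod n → ℕ} {i : ZMod n}
    (hi : lab n τ (i + 1) i = false) (x : ZMod n → Bool) :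
    ecaAsync n (fun a b c => !a && b && c) τ x i = false := by
  have hback : lab n τ i (i + 1) = true := by
    simpa [lab] using ((lab_eq_false_iff τ).mp hi).le
  rw [ecaAsync_apply _ τ x i, hi, if_neg Bool.false_ne_true, ecaAsync_apply _ τ x (i + 1),
    add_sub_cancel_right, hback, if_pos rfl]
  cases x i <;> simp

theorem rule_8_eq_general (n : ℕ) (τ τ' : ZMod n → ℕ) (i : ZMod n)
    (h1 : lab n τ (i + 1) i = false ∧ lab n τ' (i + 1) i = false)
    (h3 : ∀ j k : ZMod n, (k = j + 1 ∨ k = j - 1) → (j, k) ≠ (i - 1, i) →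
      lab n τ j k = lab n τ' j k) :
    ecaAsync n (fun a b c => !a && b && c) τ =
      ecaAsync n (fun a b c => !a && b && c) τ' := by
  refine ecaAsync_eq_of_lab_eq _ τ i (fun x => ?_) (fun j hj => ⟨?_, ?_⟩)
  · rw [ecaAsync_rule8_eq_false h1.1, ecaAsync_rule8_eq_false h1.2]
  · exact h3 _ _ (Or.inl (sub_add_cancel j 1).symm) (by simp [hj])
  · exact h3 _ _ (Or.inr (add_sub_cancel_right j 1).symm) (by simp [hj])

/-- Rule 8: if the two schedules agree everywhere except on the arc $(i-1,i)$,
and the arc $(i+1,i)$ is labeled ⊖ in both, then the dynamics coincide. -/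
theorem rule_8_eq (n : ℕ) (hn : 3 ≤ n) (τ τ' : ZMod n → ℕ) (i : ZMod n)
    (h1 : lab n τ (i + 1) i = false ∧ lab n τ' (i + 1) i = false)
    (h2 : lab n τ (i - 1) i ≠ lab n τ' (i - 1) i)
    (h3 : ∀ j k : ZMod n, (k = j + 1 ∨ k = j - 1) → (j, k) ≠ (i - 1, i) →
      lab n τ j k = lab n τ' j k) :
    ecaAsync n (fun a b c => !a && b && c) τ =
      ecaAsync n (fun a b c => !a && b && c) τ' :=
  rule_8_eq_general n τ τ' i h1 h3
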